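/- arXiv:2108.01637 — 3 statements merged into one kernel-verified Lean document; each statement's English description precedes it below -/
import Mathlib

section
/- Let H₂ be the 2N × n_v·N block matrix whose first block row consists of n_v copies of the N × N identity matrix and whose second block row is [P₁, P₂, …, P_{n_v}] for N × N permutation matrices Pᵢ. Let C = P₁ + P₂ + ⋯ + P_{n_v} (sum over ℕ). Then the Tanner graph of H₂ contains a cycle of length 2l if and only if the Tanner graph (bipartite graph with biadjacency structure given by nonzero entries) of C contains a cycle of length l. -/
open Matrix

/-- The permutation matrix (over ℕ) associated with a permutation. -/
def permMatrix {N : ℕ} (σ : Equiv.Perm (Fin N)) : Matrix (Fin N) (Fin N) ℕ :=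
  Matrix.of fun i j => if σ i = j then 1 else 0

/-- The Tanner graph of an ℕ-valued matrix: the bipartite simple graph on rows ⊕ columns
with an edge between row `i` and column `j` whenever `M i j ≠ 0`. -/
def tanner {α β : Type*} (M : Matrix α β ℕ) : SimpleGraph (α ⊕ β) :=
  SimpleGraph.fromRel fun u v => ∃ i j, u = Sum.inl i ∧ v = Sum.inr j ∧ M i j ≠ 0

open Classical in
/-- The girth of the Tanner (multi)graph of an ℕ-valued matrix: an entry `≥ 2` is a
multiple edge, giving girth `2`; otherwise the girth of the Tanner simple graph
(`⊤` if there is no cycle). -/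
noncomputable def matGirth {α β : Type*} (M : Matrix α β ℕ) : ℕ∞ :=
  if ∃ i j, 2 ≤ M i j then 2 else (tanner M).egirth


/-- The block matrix with first block row all identities and second block row the
permutation matrices `P j`. -/
def H2mat {N nv : ℕ} (P : Fin nv → Equiv.Perm (Fin N)) :
    Matrix (Fin 2 × Fin N) (Fin nv × Fin N) ℕ :=
  Matrix.of fun p q =>
    if p.1 = 0 then (if p.2 = q.2 then 1 else 0) else permMatrix (P q.1) p.2 q.2

/-
Every variable node `(j, k)` of the Tanner graph of `H₂` has exactly two neighbours, the check
nodes `(0, k)` and `(1, Pⱼ⁻¹ k)`. So this graph is the subdivision of a multigraph on the check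
nodes, and that multigraph is the Tanner multigraph of `C`: the edge between `(1, i)` and
`(0, k)` has multiplicity `C i k = #{j | Pⱼ i = k}`. Subdividing doubles the lengths of cycles;
the cycles of length at least 3 of a multigraph are those of its underlying simple graph, and
its cycles of length 2 are the pairs of parallel edges, i.e. the entries `C i k ≥ 2`.
-/

open SimpleGraph Sum

lemma SimpleGraph.Walk.cons_isCycle_iff_isPath {W : Type*} {G : SimpleGraph W} {u v : W}
    (h : G.Adj u v) (p : G.Walk v u) : (cons h p).IsCycle ↔ p.IsPath ∧ 2 ≤ p.length := by
  simp [isCycle_iff_isPath_tail_and_le_length]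

lemma SimpleGraph.Hom.exists_isCycle_length_of_injective {α β : Type*} {G : SimpleGraph α}
    {G' : SimpleGraph β} (f : G →g G') (hf : Function.Injective f) {n : ℕ} :
    (∃ v, ∃ w : G.Walk v v, w.IsCycle ∧ w.length = n) →
      ∃ v, ∃ w : G'.Walk v v, w.IsCycle ∧ w.length = n := by
  rintro ⟨v, w, hw, rfl⟩
  exact ⟨f v, w.map f, hw.map hf, w.length_map _⟩

lemma SimpleGraph.Iso.exists_isCycle_length_iff {α β : Type*} {G : SimpleGraph α}
    {G' : SimpleGraph β} (φ : G ≃g G') (n : ℕ) :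
    (∃ v, ∃ w : G.Walk v v, w.IsCycle ∧ w.length = n) ↔
      ∃ v, ∃ w : G'.Walk v v, w.IsCycle ∧ w.length = n :=
  ⟨φ.toHom.exists_isCycle_length_of_injective φ.injective,
    φ.symm.toHom.exists_isCycle_length_of_injective φ.symm.injective⟩

section Tanner

variable {α β : Type*}

lemma tanner_adj_inl_inr {M : Matrix α β ℕ} {i : α} {j : β} :
    (tanner M).Adj (inl i) (inr j) ↔ M i j ≠ 0 := by
  simp [tanner]

lemma tanner_adj_inr_inl {M : Matrix α β ℕ} {i : α} {j : β} :
    (tanner M).Adj (inr j) (inl i) ↔ M i j ≠ 0 := by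
  rw [adj_comm, tanner_adj_inl_inr]

lemma not_tanner_adj_inl_inl {M : Matrix α β ℕ} {i i' : α} :
    ¬(tanner M).Adj (inl i) (inl i') := by
  simp [tanner]

lemma not_tanner_adj_inr_inr {M : Matrix α β ℕ} {j j' : β} :
    ¬(tanner M).Adj (inr j) (inr j') := by
  simp [tanner]

lemma tanner_congr {M M' : Matrix α β ℕ} (h : ∀ i j, M i j ≠ 0 ↔ M' i j ≠ 0) :
    tanner M = tanner M' := by
  simp_rw [tanner, h]

end Tanner

section Subdivision

variable {V E : Type*}

open Classical in
/-- The subdivision of the multigraph with edges `E`, edge `e` joining the ends `ends e`,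
built as the Tanner graph of its vertex-edge incidence matrix. -/
noncomputable def subdivisionGraph (ends : E → Sym2 V) : SimpleGraph (V ⊕ E) :=
  tanner (Matrix.of fun v e => if v ∈ ends e then 1 else 0)

variable {ends : E → Sym2 V}

lemma subdivisionGraph_adj_inl_inr {v : V} {e : E} :
    (subdivisionGraph ends).Adj (inl v) (inr e) ↔ v ∈ ends e := by
  simp [subdivisionGraph, tanner_adj_inl_inr]

lemma subdivisionGraph_adj_inr_inl {v : V} {e : E} :
    (subdivisionGraph ends).Adj (inr e) (inl v) ↔ v ∈ ends e := by
  rw [adj_comm, subdivisionGraph_adj_inl_inr]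

lemma ends_eq_of_adj_of_adj {a c : V} {e : E} (hac : a ≠ c)
    (ha : (subdivisionGraph ends).Adj (inl a) (inr e))
    (hc : (subdivisionGraph ends).Adj (inr e) (inl c)) : ends e = s(a, c) :=
  (Sym2.mem_and_mem_iff hac).1
    ⟨subdivisionGraph_adj_inl_inr.1 ha, subdivisionGraph_adj_inr_inl.1 hc⟩

lemma SimpleGraph.Walk.exists_eq_cons_cons_of_subdivisionGraph {a b : V}
    (Q : (subdivisionGraph ends).Walk (inl a) (inl b)) (hQ : ¬Q.Nil) :
    ∃ (e : E) (c : V) (h₁ : (subdivisionGraph ends).Adj (inl a) (inr e))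
      (h₂ : (subdivisionGraph ends).Adj (inr e) (inl c))
      (Q' : (subdivisionGraph ends).Walk (inl c) (inl b)), Q = .cons h₁ (.cons h₂ Q') := by
  cases Q with
  | nil => exact absurd Walk.Nil.nil hQ
  | @cons _ x _ h₁ T =>
    cases x with
    | inl _ => exact absurd h₁ not_tanner_adj_inl_inl
    | inr e =>
      cases T with
      | @cons _ y _ h₂ Q' =>
        cases y with
        | inl c => exact ⟨e, c, h₁, h₂, Q', rfl⟩
        | inr _ => exact absurd h₂ not_tanner_adj_inr_inr

/-- The simple graph underlying the multigraph; parallel edges are merged and loops dropped. -/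
abbrev skeleton (ends : E → Sym2 V) : SimpleGraph V := fromEdgeSet (Set.range ends)

lemma skeleton_adj_of_adj_of_adj {a c : V} {e : E} (hac : a ≠ c)
    (ha : (subdivisionGraph ends).Adj (inl a) (inr e))
    (hc : (subdivisionGraph ends).Adj (inr e) (inl c)) : (skeleton ends).Adj a c :=
  (fromEdgeSet_adj _).2 ⟨⟨e, ends_eq_of_adj_of_adj hac ha hc⟩, hac⟩

noncomputable def SimpleGraph.Adj.edge {u v : V} (h : (skeleton ends).Adj u v) : E :=
  ((fromEdgeSet_adj _).1 h).1.choose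

lemma SimpleGraph.Adj.ends_edge {u v : V} (h : (skeleton ends).Adj u v) :
    ends h.edge = s(u, v) :=
  ((fromEdgeSet_adj _).1 h).1.choose_spec

namespace SimpleGraph.Walk

noncomputable def subdivide : ∀ {u v : V}, (skeleton ends).Walk u v →
    (subdivisionGraph ends).Walk (inl u) (inl v)
  | _, _, nil => nil
  | _, _, cons h p =>
    cons (subdivisionGraph_adj_inl_inr.2 (h.ends_edge ▸ Sym2.mem_mk_left _ _))
      (cons (subdivisionGraph_adj_inr_inl.2 (h.ends_edge ▸ Sym2.mem_mk_right _ _)) p.subdivide)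

variable {u v : V}

@[simp]
lemma length_subdivide (p : (skeleton ends).Walk u v) : p.subdivide.length = 2 * p.length := by
  induction p with
  | nil => rfl
  | cons h p ih => simp only [subdivide, length_cons, ih]; ring

lemma inl_mem_support_subdivide {p : (skeleton ends).Walk u v} {x : V} :
    inl x ∈ p.subdivide.support ↔ x ∈ p.support := by
  induction p with
  | nil => simp [subdivide]
  | cons h p ih => simp [subdivide, ih]

lemma ends_mem_edges_of_inr_mem_support_subdivide {p : (skeleton ends).Walk u v} {e : E}
    (he : inr e ∈ p.subdivide.support) : ends e ∈ p.edges := by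
  induction p with
  | nil => simp [subdivide] at he
  | cons h p ih =>
    simp only [subdivide, support_cons, List.mem_cons, reduceCtorEq, inr.injEq, false_or] at he
    rcases he with rfl | he
    · simp [h.ends_edge]
    · exact List.mem_cons_of_mem _ (ih he)

lemma IsPath.subdivide {p : (skeleton ends).Walk u v} (hp : p.IsPath) :
    p.subdivide.IsPath := by
  induction p with
  | nil => exact IsPath.nil
  | cons h p ih =>
    rw [cons_isPath_iff] at hp
    refine (ih hp.1).cons ?_ |>.cons ?_
    · intro he
      exact hp.2 (p.fst_mem_support_of_mem_edges
        (h.ends_edge ▸ ends_mem_edges_of_inr_mem_support_subdivide he))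
    · simpa [inl_mem_support_subdivide] using hp.2

lemma IsCycle.subdivide {p : (skeleton ends).Walk u u} (hp : p.IsCycle) :
    p.subdivide.IsCycle := by
  cases p with
  | nil => exact absurd hp not_isCycle_nil
  | cons h p =>
    have hlen := hp.three_le_length
    rw [cons_isCycle_iff] at hp
    rw [Walk.subdivide, cons_isCycle_iff_isPath]
    refine ⟨hp.1.subdivide.cons fun he ↦ hp.2 ?_, by simp at hlen ⊢; omega⟩
    exact h.ends_edge ▸ ends_mem_edges_of_inr_mem_support_subdivide he

variable {a b : V}

lemma IsPath.exists_isPath_skeleton {Q : (subdivisionGraph ends).Walk (inl a) (inl b)}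
    (hQ : Q.IsPath) : ∃ q : (skeleton ends).Walk a b,
      q.IsPath ∧ Q.length = 2 * q.length ∧ ∀ x ∈ q.support, inl x ∈ Q.support := by
  induction hn : Q.length using Nat.strong_induction_on generalizing a with | _ n ih
  by_cases hnil : Q.Nil
  · obtain rfl := inl_injective hnil.eq
    exact ⟨Walk.nil, IsPath.nil, by simp [← hn, hnil.length_eq_zero], by simp⟩
  obtain ⟨e, c, h₁, h₂, Q', rfl⟩ := Q.exists_eq_cons_cons_of_subdivisionGraph hnil
  simp only [cons_isPath_iff, support_cons, List.mem_cons, reduceCtorEq, false_or] at hQ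
  obtain ⟨⟨hQ', -⟩, ha⟩ := hQ
  have hac : a ≠ c := by
    rintro rfl
    exact ha Q'.start_mem_support
  obtain ⟨q, hq, hlen, hsupp⟩ := ih Q'.length (by simp [← hn]) hQ' rfl
  refine ⟨cons (skeleton_adj_of_adj_of_adj hac h₁ h₂) q, hq.cons fun hmem ↦ ha ?_, ?_, ?_⟩
  · exact hsupp a hmem
  · simp only [← hn, length_cons, hlen]; ring
  · simp only [support_cons, List.mem_cons, forall_eq_or_imp, true_or, true_and]
    exact fun x hx ↦ Or.inr (Or.inr (hsupp x hx))

lemma IsCycle.exists_eq_cons_cons_of_subdivisionGraph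
    {W : (subdivisionGraph ends).Walk (inl a) (inl a)} (hW : W.IsCycle) :
    ∃ (e : E) (c : V) (h₁ : (subdivisionGraph ends).Adj (inl a) (inr e))
      (h₂ : (subdivisionGraph ends).Adj (inr e) (inl c))
      (Q : (subdivisionGraph ends).Walk (inl c) (inl a)),
      W = cons h₁ (cons h₂ Q) ∧ Q.IsPath ∧ inr e ∉ Q.support ∧ a ≠ c := by
  obtain ⟨e, c, h₁, h₂, Q, rfl⟩ := W.exists_eq_cons_cons_of_subdivisionGraph hW.not_nil
  rw [cons_isCycle_iff_isPath, cons_isPath_iff] at hW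
  obtain ⟨⟨hQ, he⟩, hlen⟩ := hW
  refine ⟨e, c, h₁, h₂, Q, rfl, hQ, he, ?_⟩
  rintro rfl
  have hQnil : Q = nil := congrArg Subtype.val (Path.loop_eq ⟨Q, hQ⟩)
  simp [hQnil] at hlen

lemma IsCycle.exists_isCycle_skeleton {W : (subdivisionGraph ends).Walk (inl a) (inl a)}
    (hW : W.IsCycle) {l : ℕ} (hlen : W.length = 2 * l) (hl : 3 ≤ l) :
    ∃ w : (skeleton ends).Walk a a, w.IsCycle ∧ w.length = l := by
  obtain ⟨e, c, h₁, h₂, Q, rfl, hQ, -, hac⟩ := hW.exists_eq_cons_cons_of_subdivisionGraph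
  obtain ⟨q, hq, hQq, -⟩ := hQ.exists_isPath_skeleton
  simp only [length_cons, hQq] at hlen
  refine ⟨cons (skeleton_adj_of_adj_of_adj hac h₁ h₂) q, ?_, by simp; omega⟩
  exact (cons_isCycle_iff_isPath _ _).2 ⟨hq, by omega⟩

lemma IsCycle.exists_ends_eq {W : (subdivisionGraph ends).Walk (inl a) (inl a)}
    (hW : W.IsCycle) (hlen : W.length = 4) :
    ∃ e e', e ≠ e' ∧ ends e = ends e' ∧ ¬(ends e).IsDiag := by
  obtain ⟨e, c, h₁, h₂, Q, rfl, -, he, hac⟩ := hW.exists_eq_cons_cons_of_subdivisionGraph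
  have hQ : ¬Q.Nil := by rw [not_nil_iff_lt_length]; simp at hlen; omega
  obtain ⟨e', a', h₃, h₄, Q', rfl⟩ := Q.exists_eq_cons_cons_of_subdivisionGraph hQ
  obtain rfl : a' = a := inl_injective (Q'.eq_of_length_eq_zero (by simpa using hlen))
  refine ⟨e, e', fun hee' ↦ he (by simp [hee']), ?_, ?_⟩
  · rw [ends_eq_of_adj_of_adj hac h₁ h₂, ends_eq_of_adj_of_adj hac.symm h₃ h₄, Sym2.eq_swap]
  · rw [ends_eq_of_adj_of_adj hac h₁ h₂, Sym2.mk_isDiag_iff]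
    exact hac

end SimpleGraph.Walk

lemma exists_isCycle_inl_of_isCycle {v : V ⊕ E} {W : (subdivisionGraph ends).Walk v v}
    (hW : W.IsCycle) : ∃ (a : V) (W' : (subdivisionGraph ends).Walk (inl a) (inl a)),
      W'.IsCycle ∧ W'.length = W.length := by
  classical
  obtain ⟨a, ha⟩ : ∃ a, inl a ∈ W.support := by
    cases W with
    | nil => exact absurd hW Walk.not_isCycle_nil
    | @cons _ x _ h T =>
      cases v with
      | inl a => exact ⟨a, Walk.start_mem_support _⟩
      | inr _ =>
        cases x with
        | inl a => exact ⟨a, by simp⟩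
        | inr _ => exact absurd h not_tanner_adj_inr_inr
  exact ⟨a, W.rotate _ ha, hW.rotate ha, Walk.length_rotate ..⟩

lemma exists_isCycle_length_four_of_ends_eq {e e' : E} (hee' : e ≠ e')
    (h : ends e = ends e') (hd : ¬(ends e).IsDiag) :
    ∃ (a : V) (W : (subdivisionGraph ends).Walk (inl a) (inl a)), W.IsCycle ∧ W.length = 4 := by
  rcases hz : ends e with ⟨a, c⟩
  have hac : a ≠ c := by simpa [hz] using hd
  have ha : a ∈ ends e := hz ▸ Sym2.mem_mk_left a c
  have hc : c ∈ ends e := hz ▸ Sym2.mem_mk_right a c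
  refine ⟨a, .cons (subdivisionGraph_adj_inl_inr.2 ha) <| .cons (subdivisionGraph_adj_inr_inl.2 hc)
    <| .cons (subdivisionGraph_adj_inl_inr.2 (h ▸ hc))
    <| .cons (subdivisionGraph_adj_inr_inl.2 (h ▸ ha)) .nil, ?_, rfl⟩
  rw [Walk.cons_isCycle_iff_isPath]
  simp [hac.symm, hee']

theorem subdivisionGraph_exists_isCycle_iff (l : ℕ) :
    (∃ v, ∃ W : (subdivisionGraph ends).Walk v v, W.IsCycle ∧ W.length = 2 * l) ↔
      (l = 2 ∧ ∃ e e', e ≠ e' ∧ ends e = ends e' ∧ ¬(ends e).IsDiag) ∨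
        ∃ v, ∃ w : (skeleton ends).Walk v v, w.IsCycle ∧ w.length = l := by
  constructor
  · rintro ⟨v, W, hW, hlen⟩
    obtain ⟨a, W, hW, hlen'⟩ := exists_isCycle_inl_of_isCycle hW
    rw [← hlen'] at hlen
    have := hW.three_le_length
    obtain rfl | hl : l = 2 ∨ 3 ≤ l := by omega
    · exact Or.inl ⟨rfl, hW.exists_ends_eq hlen⟩
    · exact Or.inr ⟨a, hW.exists_isCycle_skeleton hlen hl⟩
  · rintro (⟨rfl, e, e', hee', h, hd⟩ | ⟨v, w, hw, rfl⟩)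
    · obtain ⟨a, W, hW, hlen⟩ := exists_isCycle_length_four_of_ends_eq hee' h hd
      exact ⟨inl a, W, hW, hlen⟩
    · exact ⟨inl v, w.subdivide, hw.subdivide, by simp⟩

end Subdivision

section PermutationCode

variable {N nv : ℕ}

/-- Column `(j, k)` of `H2mat P` has exactly two nonzero entries, both `1`, in the rows
`(0, k)` and `(1, (P j)⁻¹ k)`: it is an edge of a multigraph on the rows. -/
def permEnds (P : Fin nv → Equiv.Perm (Fin N)) (q : Fin nv × Fin N) : Sym2 (Fin 2 × Fin N) :=
  s((0, q.2), (1, (P q.1).symm q.2))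

lemma tanner_H2mat (P : Fin nv → Equiv.Perm (Fin N)) :
    tanner (H2mat P) = subdivisionGraph (permEnds P) := by
  refine tanner_congr fun ⟨r, m⟩ ⟨j, k⟩ ↦ ?_
  fin_cases r <;> simp [H2mat, permMatrix, permEnds, Equiv.eq_symm_apply]

lemma sum_permMatrix_apply (P : Fin nv → Equiv.Perm (Fin N)) (i k : Fin N) :
    (∑ j, permMatrix (P j)) i k = (Finset.univ.filter fun j ↦ P j i = k).card := by
  simp [Matrix.sum_apply, permMatrix, Finset.sum_boole]

lemma sum_permMatrix_apply_ne_zero {P : Fin nv → Equiv.Perm (Fin N)} {i k : Fin N} :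
    (∑ j, permMatrix (P j)) i k ≠ 0 ↔ ∃ j, P j i = k := by
  simp [sum_permMatrix_apply]

lemma two_le_sum_permMatrix_apply {P : Fin nv → Equiv.Perm (Fin N)} {i k : Fin N} :
    2 ≤ (∑ j, permMatrix (P j)) i k ↔ ∃ j j', j ≠ j' ∧ P j i = k ∧ P j' i = k := by
  rw [sum_permMatrix_apply, Nat.succ_le_iff, Finset.one_lt_card]
  simp only [Finset.mem_filter, Finset.mem_univ, true_and]
  grind

lemma permEnds_eq_permEnds_iff {P : Fin nv → Equiv.Perm (Fin N)} {j j' : Fin nv} {k k' : Fin N} :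
    permEnds P (j, k) = permEnds P (j', k') ↔ k = k' ∧ (P j).symm k = (P j').symm k' := by
  simp [permEnds]

lemma not_isDiag_permEnds (P : Fin nv → Equiv.Perm (Fin N)) (q : Fin nv × Fin N) :
    ¬(permEnds P q).IsDiag := by
  simp [permEnds]

lemma exists_permEnds_eq_iff (P : Fin nv → Equiv.Perm (Fin N)) :
    (∃ e e', e ≠ e' ∧ permEnds P e = permEnds P e' ∧ ¬(permEnds P e).IsDiag) ↔
      ∃ i k, 2 ≤ (∑ j, permMatrix (P j)) i k := by
  simp only [two_le_sum_permMatrix_apply, not_isDiag_permEnds, not_false_eq_true, and_true]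
  constructor
  · rintro ⟨⟨j, k⟩, ⟨j', k'⟩, hne, heq⟩
    obtain ⟨rfl, h⟩ := permEnds_eq_permEnds_iff.1 heq
    refine ⟨(P j).symm k, k, j, j', fun hj ↦ hne (by rw [hj]), by simp, ?_⟩
    rw [h, Equiv.apply_symm_apply]
  · rintro ⟨i, k, j, j', hj, rfl, h⟩
    refine ⟨(j, P j i), (j', P j i), fun he ↦ hj (congrArg Prod.fst he), ?_⟩
    rw [permEnds_eq_permEnds_iff, Equiv.symm_apply_apply, ← h, Equiv.symm_apply_apply]
    exact ⟨rfl, rfl⟩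

def rowEquiv (N : ℕ) : Fin 2 × Fin N ≃ Fin N ⊕ Fin N where
  toFun p := if p.1 = 0 then inr p.2 else inl p.2
  invFun := Sum.elim (Prod.mk 1) (Prod.mk 0)
  left_inv := by rintro ⟨r, m⟩; fin_cases r <;> rfl
  right_inv := by rintro (i | k) <;> rfl

def skeletonPermEndsIso (P : Fin nv → Equiv.Perm (Fin N)) :
    skeleton (permEnds P) ≃g tanner (∑ j, permMatrix (P j)) where
  toEquiv := rowEquiv N
  map_rel_iff' {x y} := by
    obtain ⟨r, m⟩ := x
    obtain ⟨r', m'⟩ := y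
    fin_cases r <;> fin_cases r' <;>
      simp [rowEquiv, permEnds, tanner_adj_inl_inr, tanner_adj_inr_inl, not_tanner_adj_inl_inl,
        not_tanner_adj_inr_inr, sum_permMatrix_apply_ne_zero, Equiv.symm_apply_eq] <;>
      exact exists_congr fun _ ↦ eq_comm

end PermutationCode

theorem stmt5 {N nv : ℕ} (P : Fin nv → Equiv.Perm (Fin N)) (l : ℕ) :
    (∃ v, ∃ w : (tanner (H2mat P)).Walk v v, w.IsCycle ∧ w.length = 2 * l) ↔
      ((l = 2 ∧ ∃ a b, 2 ≤ (∑ j, permMatrix (P j)) a b) ∨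
        ∃ v, ∃ w : (tanner (∑ j, permMatrix (P j))).Walk v v, w.IsCycle ∧ w.length = l) := by
  rw [tanner_H2mat, subdivisionGraph_exists_isCycle_iff, exists_permEnds_eq_iff,
    (skeletonPermEndsIso P).exists_isCycle_length_iff]
end

section
/- Let C_H be the n_cN × n_cN block matrix with zero diagonal blocks and off-diagonal blocks C_{ij} = Σ_{k=1}^{n_v} P_{ik} P_{jk}ᵀ built from N × N permutation matrices P_{ij} with n_v ≥ 2. If n_c ≥ 3, then the Tanner graph of C_H contains a cycle of length at most 6; if n_c ≥ 4, it contains a cycle of length at most 4. -/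
open Matrix

/-- The block matrix `C_H` with zero diagonal blocks and off-diagonal blocks
`C_{ij} = Σ_k P_{ik} P_{jk}ᵀ`. -/
def CHmat {N nc nv : ℕ} (σ : Fin nc → Fin nv → Equiv.Perm (Fin N)) :
    Matrix (Fin nc × Fin N) (Fin nc × Fin N) ℕ :=
  Matrix.of fun p q =>
    if p.1 = q.1 then 0
    else (∑ k, permMatrix (σ p.1 k) * (permMatrix (σ q.1 k))ᵀ) p.2 q.2

/-!
Fix a layer `k` and a point `x`, and put `v i = (i, σ i k⁻¹ x)`. The `k`-th summand of the block
`C_{ij}` has entry `1` at `(v i, v j)`, so every row `v i` of `C_H` meets every column `v j` with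
`j ≠ i` in a nonzero entry: the Tanner graph contains the crown graph on `n_c` vertices. Three
indices of the crown give the hexagon `r₀ c₁ r₂ c₀ r₁ c₂`, four give the square `r₀ c₂ r₁ c₃`.
-/

section Tanner

variable {α β : Type*} {M : Matrix α β ℕ}

lemma tanner_adj_inl_inr_s18 {a : α} {b : β} :
    (tanner M).Adj (Sum.inl a) (Sum.inr b) ↔ M a b ≠ 0 := by
  simp [tanner]

lemma matGirth_le_of_egirth_tanner_le {n : ℕ∞} (hn : 2 ≤ n) (h : (tanner M).egirth ≤ n) :
    matGirth M ≤ n := by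
  unfold matGirth
  split_ifs
  exacts [hn, h]

lemma egirth_tanner_le_four (a : Fin 2 → α) (b : Fin 2 → β) (ha : a.Injective)
    (hb : b.Injective) (hM : ∀ i j, M (a i) (b j) ≠ 0) : (tanner M).egirth ≤ 4 := by
  have adj : ∀ i j, (tanner M).Adj (Sum.inl (a i)) (Sum.inr (b j)) :=
    fun i j => tanner_adj_inl_inr_s18.mpr (hM i j)
  let w : (tanner M).Walk (Sum.inl (a 0)) (Sum.inl (a 0)) :=
    .cons (adj 0 0) <| .cons (adj 1 0).symm <| .cons (adj 1 1) <| .cons (adj 0 1).symm .nil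
  have hw : w.IsCycle := by
    simp [w, SimpleGraph.Walk.isCycle_def, ha.eq_iff, hb.eq_iff]
  exact SimpleGraph.egirth_le_length hw

lemma egirth_tanner_le_six (a : Fin 3 → α) (b : Fin 3 → β) (ha : a.Injective)
    (hb : b.Injective) (hM : ∀ i j, i ≠ j → M (a i) (b j) ≠ 0) : (tanner M).egirth ≤ 6 := by
  have adj : ∀ i j, i ≠ j → (tanner M).Adj (Sum.inl (a i)) (Sum.inr (b j)) :=
    fun i j hij => tanner_adj_inl_inr_s18.mpr (hM i j hij)
  let w : (tanner M).Walk (Sum.inl (a 0)) (Sum.inl (a 0)) :=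
    .cons (adj 0 1 (by decide)) <| .cons (adj 2 1 (by decide)).symm <|
    .cons (adj 2 0 (by decide)) <| .cons (adj 1 0 (by decide)).symm <|
    .cons (adj 1 2 (by decide)) <| .cons (adj 0 2 (by decide)).symm .nil
  have hw : w.IsCycle := by
    simp [w, SimpleGraph.Walk.isCycle_def, ha.eq_iff, hb.eq_iff]
  exact SimpleGraph.egirth_le_length hw

end Tanner

section Crown

variable {ι α β : Type*} {M : Matrix α β ℕ} {r : ι → α} {c : ι → β}

lemma matGirth_le_six_of_crown (hr : r.Injective) (hc : c.Injective)
    (hM : ∀ i j, i ≠ j → M (r i) (c j) ≠ 0) (e : Fin 3 ↪ ι) : matGirth M ≤ 6 :=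
  matGirth_le_of_egirth_tanner_le (by norm_num) <|
    egirth_tanner_le_six (r ∘ e) (c ∘ e) (hr.comp e.injective) (hc.comp e.injective)
      fun i j hij => hM _ _ (e.injective.ne hij)

lemma matGirth_le_four_of_crown (hr : r.Injective) (hc : c.Injective)
    (hM : ∀ i j, i ≠ j → M (r i) (c j) ≠ 0) (e : Fin 4 ↪ ι) : matGirth M ≤ 4 :=
  matGirth_le_of_egirth_tanner_le (by norm_num) <|
    egirth_tanner_le_four (r ∘ e ∘ Fin.castAdd 2) (c ∘ e ∘ Fin.natAdd 2)
      (hr.comp <| e.injective.comp <| Fin.castAdd_injective 2 2)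
      (hc.comp <| e.injective.comp <| Fin.natAdd_injective 2 2)
      fun i j => hM _ _ <| e.injective.ne <|
        Fin.ne_of_lt <| i.isLt.trans_le (Nat.le_add_right 2 j)

end Crown

lemma CHmat_apply_ne_zero {N nc nv : ℕ} (σ : Fin nc → Fin nv → Equiv.Perm (Fin N)) (k : Fin nv)
    (x : Fin N) {i j : Fin nc} (hij : i ≠ j) :
    CHmat σ (i, (σ i k)⁻¹ x) (j, (σ j k)⁻¹ x) ≠ 0 := by
  simp only [CHmat, of_apply, hij, if_false, permMatrix, Matrix.sum_apply, mul_apply,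
    transpose_apply]
  exact (Finset.sum_pos' (fun _ _ => Nat.zero_le _) ⟨k, Finset.mem_univ _,
    Finset.sum_pos' (fun _ _ => Nat.zero_le _) ⟨x, Finset.mem_univ _, by simp⟩⟩).ne'

theorem stmt18 {N nc nv : ℕ} (hN : 0 < N) (hnv : 2 ≤ nv)
    (σ : Fin nc → Fin nv → Equiv.Perm (Fin N)) :
    (3 ≤ nc → matGirth (CHmat σ) ≤ 6) ∧ (4 ≤ nc → matGirth (CHmat σ) ≤ 4) := by
  let v : Fin nc → Fin nc × Fin N := fun i => (i, (σ i ⟨0, by omega⟩)⁻¹ ⟨0, hN⟩)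
  have hv : v.Injective := fun i j h => congrArg Prod.fst h
  have hC : ∀ i j, i ≠ j → CHmat σ (v i) (v j) ≠ 0 := fun _ _ => CHmat_apply_ne_zero σ _ _
  exact ⟨fun hnc => matGirth_le_six_of_crown hv hv hC (Fin.castLEEmb hnc),
    fun hnc => matGirth_le_four_of_crown hv hv hC (Fin.castLEEmb hnc)⟩
end

section
/- Every N × N circulant permutation matrix with N = N₁N₂ is permutation-equivalent (via simultaneous row and column reorderings) to an N₁ × N₁ block matrix whose blocks are N₂ × N₂ circulant permutation matrices: specifically, the circulant x^{N₁ a + r} (0 ≤ r < N₁) is equivalent to the N₁ × N₁ array having block x^{a+1} in positions (k, k+r mod N₁) with k + r ≥ N₁ and block x^{a} in positions (k, k+r mod N₁) with k + r < N₁, and zero elsewhere. -/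
/-- The `N × N` circulant permutation matrix with shift `r` (mod `N`):
entry `(i, j)` equals `1` iff `j ≡ i + r (mod N)`. -/
def circ (N : ℕ) (r : ZMod N) : Matrix (Fin N) (Fin N) ℕ :=
  Matrix.of fun i j => if ((j : ℕ) : ZMod N) = ((i : ℕ) : ZMod N) + r then 1 else 0

/-!
Write indices of `Fin (N₁ * N₂)` as `i = i₁ + N₁ * i₂` with `i₁ < N₁`. Adding the shift
`N₁ * a + r` to `i` adds `r` to the low digit `i₁` modulo `N₁` and `a` plus the carry
`(i₁ + r) / N₁ ∈ {0, 1}` to the high digit `i₂` modulo `N₂`; since the digits of a residue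
modulo `N₁ * N₂` are determined by it, the shifted index is read off digitwise.
-/

namespace Nat

theorem add_mul_modEq_add_mul_iff {n m x₁ y₁ : ℕ} (x₂ y₂ : ℕ) (hx : x₁ < n) (hy : y₁ < n) :
    x₁ + n * x₂ ≡ y₁ + n * y₂ [MOD n * m] ↔ x₁ = y₁ ∧ x₂ ≡ y₂ [MOD m] := by
  constructor
  · intro h
    have hxy : x₁ = y₁ := by
      simpa [Nat.ModEq, Nat.mod_eq_of_lt hx, Nat.mod_eq_of_lt hy] using h.of_mul_right m
    subst hxy
    exact ⟨rfl, (h.add_left_cancel' x₁).mul_left_cancel' (by omega)⟩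
  · rintro ⟨rfl, h⟩
    exact (h.mul_left' n).add_left x₁

theorem add_mul_modEq_add_mul_add_iff {n m y₁ : ℕ} (x₁ x₂ y₂ a r : ℕ) (hy : y₁ < n) :
    y₁ + n * y₂ ≡ x₁ + n * x₂ + (n * a + r) [MOD n * m] ↔
      y₁ ≡ x₁ + r [MOD n] ∧ y₂ ≡ x₂ + (a + (x₁ + r) / n) [MOD m] := by
  have hdigits : x₁ + n * x₂ + (n * a + r) = (x₁ + r) % n + n * (x₂ + (a + (x₁ + r) / n)) := by
    linarith [Nat.mod_add_div (x₁ + r) n]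
  rw [hdigits, add_mul_modEq_add_mul_iff _ _ hy (Nat.mod_lt _ (by omega))]
  simp only [Nat.ModEq, Nat.mod_eq_of_lt hy]

theorem add_div_eq_ite_of_lt {n x r : ℕ} (hx : x < n) (hr : r < n) :
    (x + r) / n = if n ≤ x + r then 1 else 0 := by
  rw [Nat.add_div (by omega), Nat.div_eq_of_lt hx, Nat.div_eq_of_lt hr,
    Nat.mod_eq_of_lt hx, Nat.mod_eq_of_lt hr, zero_add, zero_add]

end Nat

theorem ZMod.natCast_eq_natCast_add_iff {N j i s : ℕ} :
    (j : ZMod N) = (i : ZMod N) + (s : ZMod N) ↔ j ≡ i + s [MOD N] := by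
  rw [← Nat.cast_add, ZMod.natCast_eq_natCast_iff]

theorem circ_natCast_apply (N s : ℕ) (i j : Fin N) :
    circ N (s : ZMod N) i j = if (j : ℕ) ≡ i + s [MOD N] then 1 else 0 := by
  simp only [circ, Matrix.of_apply, ZMod.natCast_eq_natCast_add_iff]

/-- `i ↦ (i % m, i / m)`. -/
def finMulEquivModDiv (m n : ℕ) : Fin (m * n) ≃ Fin m × Fin n :=
  (finCongr (Nat.mul_comm m n)).trans (finProdFinEquiv.symm.trans (Equiv.prodComm _ _))

theorem val_finMulEquivModDiv_symm {m n : ℕ} (p : Fin m × Fin n) :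
    ((finMulEquivModDiv m n).symm p : ℕ) = p.1 + m * p.2 :=
  rfl

theorem stmt19_general (N₁ N₂ : ℕ) (r a : ℕ) (hr : r < N₁) :
    ∃ e : Fin (N₁ * N₂) ≃ Fin N₁ × Fin N₂,
      ∀ i j, circ (N₁ * N₂) ((N₁ * a + r : ℕ) : ZMod (N₁ * N₂)) i j =
        (Matrix.of fun (p q : Fin N₁ × Fin N₂) =>
          if ((q.1 : ℕ) : ZMod N₁) = ((p.1 : ℕ) : ZMod N₁) + (r : ZMod N₁) then
            (if N₁ ≤ (p.1 : ℕ) + r then circ N₂ ((a + 1 : ℕ) : ZMod N₂)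
             else circ N₂ ((a : ℕ) : ZMod N₂)) p.2 q.2
          else 0) (e i) (e j) := by
  let e := finMulEquivModDiv N₁ N₂
  refine ⟨e, fun i j => ?_⟩
  obtain ⟨p, rfl⟩ := e.symm.surjective i
  obtain ⟨q, rfl⟩ := e.symm.surjective j
  have hblock : (if N₁ ≤ (p.1 : ℕ) + r then circ N₂ ((a + 1 : ℕ) : ZMod N₂)
      else circ N₂ ((a : ℕ) : ZMod N₂)) = circ N₂ ((a + ((p.1 : ℕ) + r) / N₁ : ℕ) : ZMod N₂) := by
    rw [Nat.add_div_eq_ite_of_lt p.1.isLt hr]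
    split_ifs <;> rfl
  simp only [Matrix.of_apply, e.apply_symm_apply, hblock, circ_natCast_apply,
    ZMod.natCast_eq_natCast_add_iff, ← ite_and]
  rw [val_finMulEquivModDiv_symm, val_finMulEquivModDiv_symm]
  exact if_congr (Nat.add_mul_modEq_add_mul_add_iff _ _ _ _ _ q.1.isLt) rfl rfl

theorem stmt19 (N₁ N₂ : ℕ) (hN₁ : 0 < N₁) (hN₂ : 0 < N₂) (r a : ℕ) (hr : r < N₁) :
    ∃ e : Fin (N₁ * N₂) ≃ Fin N₁ × Fin N₂,
      ∀ i j, circ (N₁ * N₂) ((N₁ * a + r : ℕ) : ZMod (N₁ * N₂)) i j =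
        (Matrix.of fun (p q : Fin N₁ × Fin N₂) =>
          if ((q.1 : ℕ) : ZMod N₁) = ((p.1 : ℕ) : ZMod N₁) + (r : ZMod N₁) then
            (if N₁ ≤ (p.1 : ℕ) + r then circ N₂ ((a + 1 : ℕ) : ZMod N₂)
             else circ N₂ ((a : ℕ) : ZMod N₂)) p.2 q.2
          else 0) (e i) (e j) :=
  stmt19_general N₁ N₂ r a hr
end
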